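/- Let P be a lazy, irreducible, aperiodic Markov chain on a finite state space K with stationary distribution π, and let A ⊆ K with 0 < π(A) ≤ 1/2. Then the evolving-set quantity satisfies ψ_evo(A) ≥ (1/4)·ψ̄⁺(A). -/

import Mathlib

open Finset MeasureTheory

noncomputable section

attribute [local instance] Classical.propDecidable

variable {K : Type*} [Fintype K]

/-- `matPow P t u v` is the `t`-step transition probability from `u` to `v`. -/
def matPow (P : K → K → ℝ) : ℕ → K → K → ℝ
  | 0 => fun u v => if u = v then 1 else 0
  | (t + 1) => fun u v => ∑ w, matPow P t u w * P w v

/-- `P` is a stochastic matrix with (strictly positive) stationary distribution `π`. -/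
structure IsMarkov (P : K → K → ℝ) (π : K → ℝ) : Prop where
  nonneg : ∀ u v, 0 ≤ P u v
  rowSum : ∀ u, ∑ v, P u v = 1
  piPos : ∀ v, 0 < π v
  piSum : ∑ v, π v = 1
  stationary : ∀ v, ∑ u, π u * P u v = π v

/-- `P` is lazy: every holding probability is at least `1/2`. -/
def IsLazy (P : K → K → ℝ) : Prop := ∀ u, (1 : ℝ) / 2 ≤ P u u

/-- irreducibility: every state can reach every other state. -/
def MCIrreducible (P : K → K → ℝ) : Prop := ∀ u v : K, ∃ t : ℕ, 0 < matPow P t u v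

/-- aperiodicity: the gcd of the return times of every state is `1`. -/
def MCAperiodic (P : K → K → ℝ) : Prop :=
  ∀ u : K, ∀ d : ℕ, (∀ t : ℕ, 0 < matPow P t u u → d ∣ t) → d ≤ 1

/-- reversibility: the detailed balance condition. -/
def IsReversible (P : K → K → ℝ) (π : K → ℝ) : Prop :=
  ∀ u v, π u * P u v = π v * P v u

/-- `π`-measure of a set. -/
def meas (π : K → ℝ) (A : Finset K) : ℝ := ∑ v ∈ A, π v

/-- the time reversal `P̄(u,v) = π(v) P(v,u) / π(u)`. -/
def rev (P : K → K → ℝ) (π : K → ℝ) (u v : K) : ℝ := π v * P v u / π u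

/-- transition probability from a point into a set, w.r.t. kernel `R`. -/
def setProb (R : K → K → ℝ) (v : K) (C : Finset K) : ℝ := ∑ c ∈ C, R v c

/-- the level set `A_u = {y : R(y,A) > u}`, w.r.t. kernel `R`. -/
def levelSet (R : K → K → ℝ) (A : Finset K) (u : ℝ) : Finset K :=
  Finset.univ.filter (fun y => u < setProb R y A)

/-- `g` is a fractional subset of `S` of measure `t`. -/
def IsFracSub (π : K → ℝ) (S : Finset K) (g : K → ℝ) (t : ℝ) : Prop :=
  (∀ v, 0 ≤ g v ∧ g v ≤ 1) ∧ (∀ v ∉ S, g v = 0) ∧ ∑ v, g v * π v = t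

/-- ergodic flow from a fractional subset `g` into `C`, w.r.t. kernel `R`. -/
def fracFlow (R : K → K → ℝ) (π : K → ℝ) (g : K → ℝ) (C : Finset K) : ℝ :=
  ∑ v, g v * π v * setProb R v C

/-- `Ψ(t, Aᶜ)` w.r.t. kernel `R`: for `t ≤ π(A)` the minimal flow into `Aᶜ` from a
fractional subset of `A` of measure `t`; for `t > π(A)` the minimal flow into `A`
from a fractional subset of `Aᶜ` of measure `1 − t`. -/
def Psi (R : K → K → ℝ) (π : K → ℝ) (A : Finset K) (t : ℝ) : ℝ :=
  if t ≤ meas π A then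
    sInf {q : ℝ | ∃ g : K → ℝ, IsFracSub π A g t ∧ q = fracFlow R π g Aᶜ}
  else
    sInf {q : ℝ | ∃ g : K → ℝ, IsFracSub π Aᶜ g (1 - t) ∧ q = fracFlow R π g A}

/-- `Ψ_big(t, Aᶜ)` w.r.t. kernel `R`: maximal flow into `Aᶜ` from a fractional
subset of `A` of measure `t`. -/
def PsiSup (R : K → K → ℝ) (π : K → ℝ) (A : Finset K) (t : ℝ) : ℝ :=
  sSup {q : ℝ | ∃ g : K → ℝ, IsFracSub π A g t ∧ q = fracFlow R π g Aᶜ}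

/-- the spread `ψ⁺(A)` (w.r.t. kernel `R`). -/
def psiPlus (R : K → K → ℝ) (π : K → ℝ) (A : Finset K) : ℝ :=
  (∫ t in (0:ℝ)..(meas π A), Psi R π A t) / (meas π A) ^ 2

/-- the quantity `ψ⁻(A)` (w.r.t. kernel `R`). -/
def psiMinus (R : K → K → ℝ) (π : K → ℝ) (A : Finset K) : ℝ :=
  (∫ t in (meas π A)..(1:ℝ), Psi R π A t) / (meas π A) ^ 2

/-- the modified spread `ψ_mod(A)` (w.r.t. kernel `R`). -/
def psiMod (R : K → K → ℝ) (π : K → ℝ) (A : Finset K) : ℝ :=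
  (∫ t in (0:ℝ)..(1:ℝ), Psi R π A t / min t (1 - t)) / meas π A

/-- the global spread `ψ_gl(A)` (w.r.t. kernel `R`). -/
def psiGl (R : K → K → ℝ) (π : K → ℝ) (A : Finset K) : ℝ :=
  (∫ t in (0:ℝ)..(1:ℝ), Psi R π A t) / (meas π A) ^ 2

/-- the quantity `ψ_big(A)` (w.r.t. kernel `R`). -/
def psiBig (R : K → K → ℝ) (π : K → ℝ) (A : Finset K) : ℝ :=
  (∫ t in (0:ℝ)..(meas π A), PsiSup R π A t) / (meas π A) ^ 2

/-- the evolving-set quantity `ψ_evo(A)`, with level sets taken w.r.t. kernel `R`. -/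
def psiEvo (R : K → K → ℝ) (π : K → ℝ) (A : Finset K) : ℝ :=
  1 - ∫ u in (0:ℝ)..(1:ℝ), Real.sqrt (meas π (levelSet R A u) / meas π A)

/-- ergodic flow `Q(B,C)`. -/
def ergFlow (P : K → K → ℝ) (π : K → ℝ) (B C : Finset K) : ℝ :=
  ∑ u ∈ B, ∑ v ∈ C, π u * P u v

/-- conductance `Φ(A)`. -/
def conductance (P : K → K → ℝ) (π : K → ℝ) (A : Finset K) : ℝ :=
  ergFlow P π A Aᶜ / meas π A

def Qone (P : K → K → ℝ) (π : K → ℝ) (C D : Finset K) : ℝ :=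
  ∑ v ∈ C, setProb P v D * π v

def Qtwo (P : K → K → ℝ) (π : K → ℝ) (C D : Finset K) : ℝ :=
  ∑ v ∈ C, Real.sqrt (setProb P v D) * π v

def Qinfty (P : K → K → ℝ) (π : K → ℝ) (C D : Finset K) : ℝ :=
  meas π (C.filter (fun v => 0 < setProb P v D))

/-- discrete gradient `h₁⁺(A)`. -/
def hOneP (P : K → K → ℝ) (π : K → ℝ) (A : Finset K) : ℝ :=
  Qone P π A Aᶜ / min (meas π A) (meas π Aᶜ)

/-- discrete gradient `h₁⁻(A)`. -/
def hOneM (P : K → K → ℝ) (π : K → ℝ) (A : Finset K) : ℝ :=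
  Qone P π Aᶜ A / min (meas π A) (meas π Aᶜ)

/-- discrete gradient `h₂⁺(A)`. -/
def hTwoP (P : K → K → ℝ) (π : K → ℝ) (A : Finset K) : ℝ :=
  Qtwo P π A Aᶜ / min (meas π A) (meas π Aᶜ)

/-- discrete gradient `h₂⁻(A)`. -/
def hTwoM (P : K → K → ℝ) (π : K → ℝ) (A : Finset K) : ℝ :=
  Qtwo P π Aᶜ A / min (meas π A) (meas π Aᶜ)

/-- discrete gradient `h_∞⁺(A)`. -/
def hInfP (P : K → K → ℝ) (π : K → ℝ) (A : Finset K) : ℝ :=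
  Qinfty P π A Aᶜ / min (meas π A) (meas π Aᶜ)

/-- discrete gradient `h_∞⁻(A)`. -/
def hInfM (P : K → K → ℝ) (π : K → ℝ) (A : Finset K) : ℝ :=
  Qinfty P π Aᶜ A / min (meas π A) (meas π Aᶜ)

/-- `p` is a probability distribution. -/
def IsDist (p : K → ℝ) : Prop := (∀ v, 0 ≤ p v) ∧ ∑ v, p v = 1

/-- the distribution after `t` steps starting from `p`. -/
def stepDist (P : K → K → ℝ) (p : K → ℝ) (t : ℕ) (v : K) : ℝ :=
  ∑ u, p u * matPow P t u v

/-- total variation distance. -/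
def tvDist (μ π : K → ℝ) : ℝ := (1 / 2) * ∑ v, |μ v - π v|

/-- chi-square distance. -/
def chi2Dist (μ π : K → ℝ) : ℝ := ∑ v, (μ v / π v - 1) ^ 2 * π v

/-- total variation mixing time `τ(ε)`: the max over initial distributions of the
least time at which total variation distance drops to `ε`. -/
def mixTV (P : K → K → ℝ) (π : K → ℝ) (ε : ℝ) : ℕ :=
  sSup {n : ℕ | ∃ p : K → ℝ, IsDist p ∧
    n = sInf {t : ℕ | tvDist (stepDist P p t) π ≤ ε}}

/-- chi-square mixing time `χ²(ε)`. -/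
def mixChi2 (P : K → K → ℝ) (π : K → ℝ) (ε : ℝ) : ℕ :=
  sSup {n : ℕ | ∃ p : K → ℝ, IsDist p ∧
    n = sInf {t : ℕ | chi2Dist (stepDist P p t) π ≤ ε}}

/-- `π₀ = min_v π(v)`. -/
def piMin (π : K → ℝ) : ℝ := sInf {r : ℝ | ∃ v : K, r = π v}

/-- `ψ⁺(x)`: worst spread over sets of measure at most `x`. -/
def psiPlusSize (R : K → K → ℝ) (π : K → ℝ) (x : ℝ) : ℝ :=
  sInf {r : ℝ | ∃ A : Finset K, 0 < meas π A ∧ meas π A ≤ x ∧ r = psiPlus R π A}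

/-- `ψ_evo(x)`: worst evolving-set quantity over sets of measure at most `x`. -/
def psiEvoSize (R : K → K → ℝ) (π : K → ℝ) (x : ℝ) : ℝ :=
  sInf {r : ℝ | ∃ A : Finset K, 0 < meas π A ∧ meas π A ≤ x ∧ r = psiEvo R π A}

/-- `ψ_big(x)`: worst `ψ_big` over sets of measure at most `x`. -/
def psiBigSize (R : K → K → ℝ) (π : K → ℝ) (x : ℝ) : ℝ :=
  sInf {r : ℝ | ∃ A : Finset K, 0 < meas π A ∧ meas π A ≤ x ∧ r = psiBig R π A}

/-- Dirichlet form. -/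
def dirichletForm (P : K → K → ℝ) (π : K → ℝ) (f : K → ℝ) : ℝ :=
  (1 / 2) * ∑ u, ∑ v, π u * P u v * (f u - f v) ^ 2

/-- variance w.r.t. `π`. -/
def varPi (π : K → ℝ) (f : K → ℝ) : ℝ :=
  ∑ v, π v * f v ^ 2 - (∑ v, π v * f v) ^ 2

/-- the spectral gap `λ`. -/
def specGap (P : K → K → ℝ) (π : K → ℝ) : ℝ :=
  sInf {r : ℝ | ∃ f : K → ℝ, (∃ u v, f u ≠ f v) ∧ r = dirichletForm P π f / varPi π f}

/-- `P_* = 1 − min_{u ∈ A} P(u, A)`. -/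
def Pstar (P : K → K → ℝ) (A : Finset K) : ℝ :=
  1 - sInf {r : ℝ | ∃ u ∈ A, r = setProb P u A}

/-- `P_min = min {P(u,v)/π(v) : u ∈ A, v ∈ Aᶜ, P(u,v) > 0}`. -/
def PminEdge (P : K → K → ℝ) (π : K → ℝ) (A : Finset K) : ℝ :=
  sInf {r : ℝ | ∃ u ∈ A, ∃ v ∈ Aᶜ, 0 < P u v ∧ r = P u v / π v}

/-- `w(t) = inf {y ∈ [0,1] : π(A_y) ≤ t}`. -/
def wfun (R : K → K → ℝ) (π : K → ℝ) (A : Finset K) (t : ℝ) : ℝ :=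
  sInf {y : ℝ | y ∈ Set.Icc (0:ℝ) 1 ∧ meas π (levelSet R A y) ≤ t}

/-!
Write `c v = P̄(v, Aᶜ)` and `T = ∑_{v,w ∈ A} π(v) π(w) min (c v) (c w)`. Filling `A` greedily in
increasing order of `c` gives, for each `t ≤ π(A)`, a fractional subset of measure `t`; their flows
into `Aᶜ` integrate to `T / 2`, so `∫₀^{π(A)} Ψ̄(t, Aᶜ) dt ≤ T / 2`.

On the other side, laziness makes `A ⊆ A_u` for `u < 1/2` and `A_u ⊆ A` for `u ≥ 1/2`, so that
`π(A \ A_u) ≤ (π(A) - π(A_u))⁺` for all `u`. The elementary bound `√z ≤ (1 + z)/2 - y²/8` for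
`0 ≤ y ≤ (1 - z)⁺`, integrated over `u ∈ [0,1]` using `∫ π(A_u) du = π(A)` (stationarity) and
`∫ π(A \ A_u)² du = T`, gives `ψ_evo(A) ≥ T / (8 π(A)²) ≥ ψ̄⁺(A) / 4`.
-/

section Basic

variable {ι : Type*} {π : ι → ℝ}

lemma meas_nonneg (hπ : ∀ v, 0 ≤ π v) (S : Finset ι) : 0 ≤ meas π S :=
  Finset.sum_nonneg fun v _ => hπ v

lemma meas_mono (hπ : ∀ v, 0 ≤ π v) {S T : Finset ι} (h : S ⊆ T) : meas π S ≤ meas π T :=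
  Finset.sum_le_sum_of_subset_of_nonneg h fun v _ _ => hπ v

lemma setProb_nonneg {R : ι → ι → ℝ} (hR : ∀ u v, 0 ≤ R u v) (v : ι) (C : Finset ι) :
    0 ≤ setProb R v C :=
  Finset.sum_nonneg fun w _ => hR v w

end Basic

lemma fracFlow_nonneg {R : K → K → ℝ} (hR : ∀ u v, 0 ≤ R u v) {π : K → ℝ} (hπ : ∀ v, 0 ≤ π v)
    {g : K → ℝ} (hg : ∀ v, 0 ≤ g v) (C : Finset K) : 0 ≤ fracFlow R π g C :=
  Finset.sum_nonneg fun v _ => mul_nonneg (mul_nonneg (hg v) (hπ v)) (setProb_nonneg hR v C)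

namespace IsMarkov

variable {P : K → K → ℝ} {π : K → ℝ} (hM : IsMarkov P π)
include hM

lemma setProb_add_setProb_compl (v : K) (C : Finset K) : setProb P v C + setProb P v Cᶜ = 1 := by
  rw [setProb, setProb, Finset.sum_add_sum_compl, hM.rowSum]

lemma setProb_le_one (v : K) (C : Finset K) : setProb P v C ≤ 1 := by
  linarith [hM.setProb_add_setProb_compl v C, setProb_nonneg hM.nonneg v Cᶜ]

lemma sum_mul_setProb (C : Finset K) : ∑ v, π v * setProb P v C = meas π C := by
  simp only [setProb, Finset.mul_sum]
  rw [Finset.sum_comm]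
  exact Finset.sum_congr rfl fun w _ => hM.stationary w

lemma half_le_setProb (hlazy : IsLazy P) {A : Finset K} {v : K} (hv : v ∈ A) :
    1 / 2 ≤ setProb P v A :=
  (hlazy v).trans (Finset.single_le_sum (fun w _ => hM.nonneg v w) hv)

lemma setProb_le_half (hlazy : IsLazy P) {A : Finset K} {v : K} (hv : v ∉ A) :
    setProb P v A ≤ 1 / 2 := by
  linarith [hM.half_le_setProb hlazy (Finset.mem_compl.2 hv), hM.setProb_add_setProb_compl v A]

end IsMarkov

lemma rev_self {ι : Type*} {P : ι → ι → ℝ} {π : ι → ℝ} (hπ : ∀ v, 0 < π v) (v : ι) :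
    rev P π v v = P v v :=
  mul_div_cancel_left₀ _ (hπ v).ne'

lemma IsMarkov.rev {P : K → K → ℝ} {π : K → ℝ} (hM : IsMarkov P π) : IsMarkov (rev P π) π where
  nonneg u v := div_nonneg (mul_nonneg (hM.piPos v).le (hM.nonneg v u)) (hM.piPos u).le
  rowSum u := by
    show ∑ v, π v * P v u / π u = 1
    rw [← Finset.sum_div, hM.stationary, div_self (hM.piPos u).ne']
  piPos := hM.piPos
  piSum := hM.piSum
  stationary v := by
    show ∑ u, π u * (π v * P v u / π u) = π v
    simp only [mul_div_cancel₀ _ (hM.piPos _).ne']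
    rw [← Finset.mul_sum, hM.rowSum, mul_one]

lemma IsLazy.rev {ι : Type*} {P : ι → ι → ℝ} {π : ι → ℝ} (hπ : ∀ v, 0 < π v) (hlazy : IsLazy P) :
    IsLazy (rev P π) := fun v => (rev_self hπ v).symm ▸ hlazy v

lemma intervalIntegrable_ite_lt (x a b : ℝ) :
    IntervalIntegrable (fun u : ℝ => if u < x then (1 : ℝ) else 0) volume a b := by
  refine Antitone.intervalIntegrable fun u w huw => ?_
  by_cases hw : w < x
  · simp [hw, huw.trans_lt hw]
  · simp only [hw, if_false]; split_ifs <;> norm_num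

lemma intervalIntegrable_ite_le (x a b : ℝ) :
    IntervalIntegrable (fun u : ℝ => if x ≤ u then (1 : ℝ) else 0) volume a b := by
  refine Monotone.intervalIntegrable fun u w huw => ?_
  by_cases hu : x ≤ u
  · simp [hu, hu.trans huw]
  · simp only [hu, if_false]; split_ifs <;> norm_num

lemma integral_ite_lt {a b x : ℝ} (hax : a ≤ x) (hxb : x ≤ b) :
    ∫ u in a..b, (if u < x then (1 : ℝ) else 0) = x - a := by
  rw [← intervalIntegral.integral_add_adjacent_intervals (intervalIntegrable_ite_lt x a x)
      (intervalIntegrable_ite_lt x x b),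
    intervalIntegral.integral_congr_Ioo_of_le hax (g := fun _ => 1) fun u hu => if_pos hu.2,
    intervalIntegral.integral_congr_Ioo_of_le hxb (g := fun _ => 0)
      fun u hu => if_neg (not_lt.2 hu.1.le)]
  simp

lemma integral_ite_le {a b x : ℝ} (hax : a ≤ x) (hxb : x ≤ b) :
    ∫ u in a..b, (if x ≤ u then (1 : ℝ) else 0) = b - x := by
  have h : (fun u : ℝ => if x ≤ u then (1 : ℝ) else 0) = fun u => 1 - if u < x then 1 else 0 := by
    funext u; by_cases hu : u < x <;> simp [hu, not_lt.1]
  rw [h, intervalIntegral.integral_sub intervalIntegrable_const (intervalIntegrable_ite_lt x a b),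
    integral_ite_lt hax hxb]
  simp

-- `(1 + z) / 2 - √z = (1 - √z) ^ 2 / 2`, and `y ≤ 1 - z ≤ 2 * (1 - √z)` when `z ≤ 1`.
lemma sqrt_le_of_le_max {y z : ℝ} (hz : 0 ≤ z) (hy : 0 ≤ y) (hyz : y ≤ max 0 (1 - z)) :
    √z ≤ (1 + z) / 2 - y ^ 2 / 8 := by
  have hs := Real.sq_sqrt hz
  have hs0 := Real.sqrt_nonneg z
  rcases le_total z 1 with hz1 | hz1
  · rw [max_eq_right (by linarith)] at hyz
    have hs1 : √z ≤ 1 := Real.sqrt_le_one.2 hz1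
    nlinarith
  · rw [max_eq_left (by linarith)] at hyz
    nlinarith [sq_nonneg (√z - 1), le_antisymm hyz hy]

section EvolvingSets

variable {R : K → K → ℝ} {π : K → ℝ} (A : Finset K)

-- `π(A)² 𝔼[min (R(X, Aᶜ)) (R(Y, Aᶜ))]` for `X`, `Y` independent with law `π(· | A)`.
def escapePairing (R : K → K → ℝ) (π : K → ℝ) (A : Finset K) : ℝ :=
  ∑ v ∈ A, ∑ w ∈ A, π v * π w * min (setProb R v Aᶜ) (setProb R w Aᶜ)

lemma meas_levelSet_eq_sum (u : ℝ) :
    meas π (levelSet R A u) = ∑ y, π y * if u < setProb R y A then 1 else 0 := by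
  simp only [meas, levelSet, Finset.sum_filter, mul_ite, mul_one, mul_zero]

lemma meas_sdiff_levelSet_eq_sum (u : ℝ) :
    meas π (A \ levelSet R A u) = ∑ v ∈ A, π v * if setProb R v A ≤ u then 1 else 0 := by
  have h : A \ levelSet R A u = A.filter fun v => setProb R v A ≤ u := by
    ext v; simp [levelSet]
  simp only [h, meas, Finset.sum_filter, mul_ite, mul_one, mul_zero]

lemma antitone_meas_levelSet (hπ : ∀ v, 0 ≤ π v) : Antitone fun u => meas π (levelSet R A u) :=
  fun _ _ huw => meas_mono hπ fun y hy => by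
    simp only [levelSet, Finset.mem_filter] at hy ⊢; exact ⟨hy.1, huw.trans_lt hy.2⟩

lemma monotone_meas_sdiff_levelSet (hπ : ∀ v, 0 ≤ π v) :
    Monotone fun u => meas π (A \ levelSet R A u) :=
  fun _ _ huw => meas_mono hπ (Finset.sdiff_subset_sdiff subset_rfl fun y hy => by
    simp only [levelSet, Finset.mem_filter] at hy ⊢; exact ⟨hy.1, huw.trans_lt hy.2⟩)

namespace IsMarkov

variable (hM : IsMarkov R π)
include hM

lemma integral_meas_levelSet : ∫ u in (0 : ℝ)..1, meas π (levelSet R A u) = meas π A := by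
  simp only [meas_levelSet_eq_sum]
  rw [intervalIntegral.integral_finsetSum fun y _ => (intervalIntegrable_ite_lt _ _ _).const_mul _]
  simp only [intervalIntegral.integral_const_mul]
  rw [← hM.sum_mul_setProb A]
  refine Finset.sum_congr rfl fun y _ => ?_
  rw [integral_ite_lt (setProb_nonneg hM.nonneg y A) (hM.setProb_le_one y A), sub_zero]

lemma integral_meas_sdiff_levelSet_sq :
    ∫ u in (0 : ℝ)..1, meas π (A \ levelSet R A u) ^ 2 = escapePairing R π A := by
  have hsq : ∀ u, meas π (A \ levelSet R A u) ^ 2 = ∑ v ∈ A, ∑ w ∈ A,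
      π v * π w * if max (setProb R v A) (setProb R w A) ≤ u then 1 else 0 := by
    intro u
    rw [meas_sdiff_levelSet_eq_sum, sq, Finset.sum_mul_sum]
    refine Finset.sum_congr rfl fun v _ => Finset.sum_congr rfl fun w _ => ?_
    by_cases hv : setProb R v A ≤ u <;> by_cases hw : setProb R w A ≤ u <;> simp [hv, hw]
  simp only [hsq]
  rw [intervalIntegral.integral_finsetSum fun v _ => by
    simpa only [← Finset.sum_fn] using IntervalIntegrable.sum A fun w _ =>
      (intervalIntegrable_ite_le _ _ _).const_mul _]
  refine Finset.sum_congr rfl fun v _ => ?_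
  rw [intervalIntegral.integral_finsetSum fun w _ => (intervalIntegrable_ite_le _ _ _).const_mul _]
  refine Finset.sum_congr rfl fun w _ => ?_
  rw [intervalIntegral.integral_const_mul, integral_ite_le
    ((setProb_nonneg hM.nonneg v A).trans (le_max_left _ _))
    (max_le (hM.setProb_le_one v A) (hM.setProb_le_one w A))]
  have hv := hM.setProb_add_setProb_compl v A
  have hw := hM.setProb_add_setProb_compl w A
  congr 1
  rcases le_total (setProb R v A) (setProb R w A) with h | h
  · rw [max_eq_right h, min_eq_right (by linarith)]; linarith
  · rw [max_eq_left h, min_eq_left (by linarith)]; linarith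

lemma meas_sdiff_levelSet_le (hlazy : IsLazy R) (u : ℝ) :
    meas π (A \ levelSet R A u) ≤ max 0 (meas π A - meas π (levelSet R A u)) := by
  rcases lt_or_ge u (1 / 2) with hu | hu
  · have hempty : A \ levelSet R A u = ∅ := Finset.sdiff_eq_empty_iff_subset.2 fun v hv => by
      simp only [levelSet, Finset.mem_filter, Finset.mem_univ, true_and]
      exact hu.trans_le (hM.half_le_setProb hlazy hv)
    simp [hempty, meas]
  · have hsub : levelSet R A u ⊆ A := fun y hy => by
      simp only [levelSet, Finset.mem_filter, Finset.mem_univ, true_and] at hy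
      by_contra hyA
      exact (hM.setProb_le_half hlazy hyA).not_gt (hu.trans_lt hy)
    rw [meas, Finset.sum_sdiff_eq_sub hsub]
    exact le_max_right _ _

lemma escapePairing_div_le_psiEvo (hlazy : IsLazy R) (hA0 : 0 < meas π A) :
    escapePairing R π A / (8 * meas π A ^ 2) ≤ psiEvo R π A := by
  have hπ : ∀ v, 0 ≤ π v := fun v => (hM.piPos v).le
  set a := meas π A
  set X := fun u => meas π (levelSet R A u)
  set Y := fun u => meas π (A \ levelSet R A u)
  have hX : Antitone X := antitone_meas_levelSet A hπ
  have hY2 : Monotone fun u => Y u ^ 2 := fun u w huw =>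
    pow_le_pow_left₀ (meas_nonneg hπ _) (monotone_meas_sdiff_levelSet A hπ huw) 2
  have hpoint : ∀ u, √(X u / a) ≤ 1 / 2 + 1 / (2 * a) * X u - 1 / (8 * a ^ 2) * Y u ^ 2 := by
    intro u
    have hYX : Y u / a ≤ max 0 (1 - X u / a) := by
      rw [div_le_iff₀ hA0, max_mul_of_nonneg _ _ hA0.le, zero_mul, sub_mul, one_mul,
        div_mul_cancel₀ _ hA0.ne']
      exact hM.meas_sdiff_levelSet_le A hlazy u
    convert sqrt_le_of_le_max (div_nonneg (meas_nonneg hπ _) hA0.le)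
      (div_nonneg (meas_nonneg hπ _) hA0.le) hYX using 1
    field_simp
    ring
  have hsqrt : IntervalIntegrable (fun u => √(X u / a)) volume 0 1 :=
    Antitone.intervalIntegrable fun u w huw =>
      Real.sqrt_le_sqrt (div_le_div_of_nonneg_right (hX huw) hA0.le)
  have hXi : IntervalIntegrable (fun u => 1 / (2 * a) * X u) volume 0 1 :=
    hX.intervalIntegrable.const_mul _
  have hYi : IntervalIntegrable (fun u => 1 / (8 * a ^ 2) * Y u ^ 2) volume 0 1 :=
    hY2.intervalIntegrable.const_mul _
  have hbound : ∫ u in (0 : ℝ)..1, (1 / 2 + 1 / (2 * a) * X u - 1 / (8 * a ^ 2) * Y u ^ 2) =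
      1 - escapePairing R π A / (8 * a ^ 2) := by
    rw [intervalIntegral.integral_sub (intervalIntegrable_const.add hXi) hYi,
      intervalIntegral.integral_add intervalIntegrable_const hXi,
      intervalIntegral.integral_const_mul, intervalIntegral.integral_const_mul,
      hM.integral_meas_levelSet, hM.integral_meas_sdiff_levelSet_sq,
      intervalIntegral.integral_const]
    field_simp
    ring
  rw [psiEvo]
  linarith [intervalIntegral.integral_mono_on zero_le_one hsqrt
    ((intervalIntegrable_const.add hXi).sub hYi) fun u _ => hpoint u]

end IsMarkov

end EvolvingSets

section Greedy

variable {ι α : Type*} [LinearOrder α] {π : ι → ℝ} {key : ι → α}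

def massBelow (π : ι → ℝ) (key : ι → α) (A : Finset ι) (v : ι) : ℝ :=
  meas π (A.filter fun w => key w < key v)

def greedyFill (π : ι → ℝ) (key : ι → α) (A : Finset ι) (t : ℝ) (v : ι) : ℝ :=
  if v ∈ A then (min t (massBelow π key A v + π v) - min t (massBelow π key A v)) / π v else 0

lemma sum_min_sub_min_massBelow (hkey : Function.Injective key) {t : ℝ} (ht : 0 ≤ t)
    (A : Finset ι) :
    ∑ v ∈ A, (min t (massBelow π key A v + π v) - min t (massBelow π key A v)) =
      min t (meas π A) := by
  induction A using Finset.induction_on_max_value key with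
  | empty => simp [meas, ht]
  | insert a s ha hmax ih =>
    have hbelow_a : massBelow π key (insert a s) a = meas π s := by
      rw [massBelow, Finset.filter_insert, if_neg (lt_irrefl _), Finset.filter_true_of_mem]
      exact fun x hx => (hmax x hx).lt_of_ne fun h => ha (hkey h ▸ hx)
    have hbelow_s : ∀ x ∈ s, massBelow π key (insert a s) x = massBelow π key s x := fun x hx => by
      rw [massBelow, massBelow, Finset.filter_insert, if_neg (hmax x hx).not_gt]
    rw [Finset.sum_insert ha, Finset.sum_congr rfl fun x hx => by rw [hbelow_s x hx], ih,
      hbelow_a]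
    simp only [meas, Finset.sum_insert ha, add_comm (π a)]
    ring

lemma massBelow_add_le (hπ : ∀ v, 0 ≤ π v) {A : Finset ι} {v : ι} (hv : v ∈ A) :
    massBelow π key A v + π v ≤ meas π A := by
  have hv' : v ∉ A.filter fun w => key w < key v := by simp
  rw [massBelow, add_comm, meas, ← Finset.sum_insert hv']
  exact meas_mono hπ (Finset.insert_subset hv (Finset.filter_subset _ _))

lemma min_sub_min_mem_Icc (t b : ℝ) {p : ℝ} (hp : 0 ≤ p) :
    min t (b + p) - min t b ∈ Set.Icc 0 p := by
  constructor
  · exact sub_nonneg.2 (min_le_min_left t (by linarith))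
  · rcases le_total t b with h | h
    · rw [min_eq_left h, min_eq_left (by linarith)]; linarith
    · rw [min_eq_right h]; linarith [min_le_right t (b + p)]

lemma isFracSub_greedyFill [Fintype ι] (hπ : ∀ v, 0 < π v) (hkey : Function.Injective key)
    (A : Finset ι) {t : ℝ} (ht0 : 0 ≤ t) (hta : t ≤ meas π A) :
    IsFracSub π A (greedyFill π key A t) t := by
  refine ⟨fun v => ?_, fun v hv => if_neg hv, ?_⟩
  · unfold greedyFill
    split_ifs
    · obtain ⟨h0, h1⟩ := min_sub_min_mem_Icc t (massBelow π key A v) (hπ v).le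
      exact ⟨div_nonneg h0 (hπ v).le, (div_le_one (hπ v)).2 h1⟩
    · exact ⟨le_rfl, zero_le_one⟩
  · simp only [greedyFill, ite_mul, zero_mul, Finset.sum_ite_mem, Finset.univ_inter,
      div_mul_cancel₀ _ (hπ _).ne']
    rw [sum_min_sub_min_massBelow hkey ht0, min_eq_left hta]

lemma integral_min_const {a x : ℝ} (hx : 0 ≤ x) (hxa : x ≤ a) :
    ∫ t in (0 : ℝ)..a, min t x = a * x - x ^ 2 / 2 := by
  have hint : ∀ b c : ℝ, IntervalIntegrable (fun t : ℝ => min t x) volume b c := fun b c =>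
    (continuous_id.min continuous_const).intervalIntegrable b c
  rw [← intervalIntegral.integral_add_adjacent_intervals (hint 0 x) (hint x a),
    intervalIntegral.integral_congr (g := fun t => t) fun t ht => min_eq_left ?_,
    intervalIntegral.integral_congr (g := fun _ => x) fun t ht => min_eq_right ?_]
  · rw [integral_id, intervalIntegral.integral_const, smul_eq_mul]
    ring
  · rw [Set.uIcc_of_le hxa] at ht; exact ht.1
  · rw [Set.uIcc_of_le hx] at ht; exact ht.2

lemma integral_min_sub_min {a b p : ℝ} (hb : 0 ≤ b) (hp : 0 ≤ p) (hbpa : b + p ≤ a) :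
    ∫ t in (0 : ℝ)..a, (min t (b + p) - min t b) = p * (a - b - p / 2) := by
  have hint : ∀ x : ℝ, IntervalIntegrable (fun t : ℝ => min t x) volume 0 a := fun x =>
    (continuous_id.min continuous_const).intervalIntegrable 0 a
  rw [intervalIntegral.integral_sub (hint _) (hint _), integral_min_const (by linarith) hbpa,
    integral_min_const hb (by linarith)]
  ring

lemma fracFlow_greedyFill [Fintype ι] (hπ : ∀ v, 0 < π v) (R : ι → ι → ℝ) (A C : Finset ι)
    (t : ℝ) :
    fracFlow R π (greedyFill π key A t) C = ∑ v ∈ A,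
      (min t (massBelow π key A v + π v) - min t (massBelow π key A v)) * setProb R v C := by
  simp only [fracFlow, greedyFill, ite_mul, zero_mul, Finset.sum_ite_mem, Finset.univ_inter,
    div_mul_cancel₀ _ (hπ _).ne']

lemma integral_sum_min_sub_min_massBelow (hπ : ∀ v, 0 ≤ π v) (A : Finset ι) (c : ι → ℝ) :
    ∫ t in (0 : ℝ)..meas π A,
        ∑ v ∈ A, (min t (massBelow π key A v + π v) - min t (massBelow π key A v)) * c v =
      ∑ v ∈ A, π v * c v * (meas π A - massBelow π key A v - π v / 2) := by
  rw [intervalIntegral.integral_finsetSum fun v _ =>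
    Continuous.intervalIntegrable (by fun_prop) _ _]
  refine Finset.sum_congr rfl fun v hv => ?_
  rw [intervalIntegral.integral_mul_const,
    integral_min_sub_min (b := massBelow π key A v) (meas_nonneg hπ _) (hπ v)
      (massBelow_add_le hπ hv)]
  ring

lemma sum_mul_massBelow_eq (hkey : Function.Injective key) {c : ι → ℝ}
    (hc : ∀ v w, key v < key w → c v ≤ c w) (A : Finset ι) :
    ∑ v ∈ A, π v * c v * (meas π A - massBelow π key A v - π v / 2) =
      (∑ v ∈ A, ∑ w ∈ A, π v * π w * min (c v) (c w)) / 2 := by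
  set θ : ι → ι → ℝ := fun v w => if key w < key v then 0 else if w = v then 1 / 2 else 1
  have hθ : ∀ v ∈ A, meas π A - massBelow π key A v - π v / 2 = ∑ w ∈ A, π w * θ v w := by
    intro v hv
    have hhalf : π v / 2 = ∑ w ∈ A, if w = v then π w / 2 else 0 := by
      rw [Finset.sum_ite_eq' A v, if_pos hv]
    rw [hhalf, massBelow, meas, meas, Finset.sum_filter, ← Finset.sum_sub_distrib,
      ← Finset.sum_sub_distrib]
    refine Finset.sum_congr rfl fun w _ => ?_
    simp only [θ]
    split_ifs with h₁ h₂ h₂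
    · exact absurd (h₂ ▸ h₁) (lt_irrefl _)
    all_goals ring
  have hpair : ∀ v w, c v * θ v w + c w * θ w v = min (c v) (c w) := by
    intro v w
    simp only [θ]
    rcases lt_trichotomy (key v) (key w) with h | h | h
    · rw [if_neg h.not_gt, if_pos h, if_neg fun e => h.ne (congrArg key e.symm),
        min_eq_left (hc v w h)]
      ring
    · obtain rfl := hkey h
      simp only [lt_irrefl, if_false, if_true, min_self]
      ring
    · rw [if_pos h, if_neg h.not_gt, if_neg fun e => h.ne (congrArg key e.symm),
        min_eq_right (hc w v h)]
      ring
  have hsum : ∑ v ∈ A, π v * c v * (meas π A - massBelow π key A v - π v / 2) =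
      ∑ v ∈ A, ∑ w ∈ A, π v * π w * (c v * θ v w) := by
    refine Finset.sum_congr rfl fun v hv => ?_
    rw [hθ v hv, Finset.mul_sum]
    exact Finset.sum_congr rfl fun w _ => by ring
  rw [hsum, eq_div_iff two_ne_zero, mul_two]
  nth_rewrite 2 [Finset.sum_comm]
  rw [← Finset.sum_add_distrib]
  refine Finset.sum_congr rfl fun v _ => ?_
  rw [← Finset.sum_add_distrib]
  refine Finset.sum_congr rfl fun w _ => ?_
  rw [← hpair v w]
  ring

end Greedy

section Spread

variable {R : K → K → ℝ} {π : K → ℝ} {A : Finset K}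

lemma Psi_nonneg (hR : ∀ u v, 0 ≤ R u v) (hπ : ∀ v, 0 ≤ π v) {t : ℝ} (ht : t ≤ meas π A) :
    0 ≤ Psi R π A t := by
  rw [Psi, if_pos ht]
  exact Real.sInf_nonneg fun _ ⟨g, hg, hq⟩ => hq ▸ fracFlow_nonneg hR hπ (fun v => (hg.1 v).1) _

lemma Psi_le_fracFlow (hR : ∀ u v, 0 ≤ R u v) (hπ : ∀ v, 0 ≤ π v) {t : ℝ} (ht : t ≤ meas π A)
    {g : K → ℝ} (hg : IsFracSub π A g t) : Psi R π A t ≤ fracFlow R π g Aᶜ := by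
  rw [Psi, if_pos ht]
  refine csInf_le ⟨0, ?_⟩ ⟨g, hg, rfl⟩
  rintro _ ⟨g', hg', rfl⟩
  exact fracFlow_nonneg hR hπ (fun v => (hg'.1 v).1) _

lemma integral_Psi_le (hR : ∀ u v, 0 ≤ R u v) (hπ : ∀ v, 0 < π v) (A : Finset K) :
    ∫ t in (0 : ℝ)..meas π A, Psi R π A t ≤ escapePairing R π A / 2 := by
  have hπ' : ∀ v, 0 ≤ π v := fun v => (hπ v).le
  set key : K → Lex (ℝ × Fin (Fintype.card K)) :=
    fun v => toLex (setProb R v Aᶜ, Fintype.equivFin K v)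
  have hkey : Function.Injective key := fun v w h =>
    (Fintype.equivFin K).injective (congrArg (fun x => (ofLex x).2) h)
  have hc : ∀ v w, key v < key w → setProb R v Aᶜ ≤ setProb R w Aᶜ := fun v w h =>
    Prod.Lex.lt_iff.1 h |>.elim le_of_lt fun h => h.1.le
  have ha := meas_nonneg hπ' A
  calc ∫ t in (0 : ℝ)..meas π A, Psi R π A t
      ≤ ∫ t in (0 : ℝ)..meas π A, ∑ v ∈ A,
          (min t (massBelow π key A v + π v) - min t (massBelow π key A v)) * setProb R v Aᶜ := by
        -- `Ψ` is nonnegative, so its integrability is not needed.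
        rw [intervalIntegral.integral_of_le ha, intervalIntegral.integral_of_le ha]
        refine integral_mono_of_nonneg
          (ae_restrict_of_forall_mem measurableSet_Ioc fun t ht => Psi_nonneg hR hπ' ht.2)
          ((Continuous.integrableOn_Ioc (by fun_prop)))
          (ae_restrict_of_forall_mem measurableSet_Ioc fun t ht => ?_)
        dsimp only
        rw [← fracFlow_greedyFill hπ]
        exact Psi_le_fracFlow hR hπ' ht.2 (isFracSub_greedyFill hπ hkey A ht.1.le ht.2)
    _ = ∑ v ∈ A, π v * setProb R v Aᶜ * (meas π A - massBelow π key A v - π v / 2) :=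
        integral_sum_min_sub_min_massBelow hπ' A _
    _ = escapePairing R π A / 2 := sum_mul_massBelow_eq hkey hc A

end Spread

theorem evolving_ge_quarter_spread_general
    (P : K → K → ℝ) (π : K → ℝ) (A : Finset K)
    (hM : IsMarkov P π) (hlazy : IsLazy P)
    (hA0 : 0 < meas π A) :
    psiEvo (rev P π) π A ≥ (1 / 4) * psiPlus (rev P π) π A := by
  have hR := hM.rev
  have hspread := integral_Psi_le hR.nonneg hR.piPos A
  have hevo := hR.escapePairing_div_le_psiEvo A (hlazy.rev hM.piPos) hA0
  rw [ge_iff_le, psiPlus]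
  calc 1 / 4 * ((∫ t in (0 : ℝ)..meas π A, Psi (rev P π) π A t) / meas π A ^ 2)
      ≤ 1 / 4 * (escapePairing (rev P π) π A / 2 / meas π A ^ 2) := by gcongr
    _ = escapePairing (rev P π) π A / (8 * meas π A ^ 2) := by ring
    _ ≤ psiEvo (rev P π) π A := hevo

/-- for a lazy, irreducible, aperiodic chain and `0 < π(A) ≤ 1/2`,
`ψ_evo(A) ≥ (1/4)·ψ̄⁺(A)`. -/
theorem evolving_ge_quarter_spread
    (P : K → K → ℝ) (π : K → ℝ) (A : Finset K)
    (hM : IsMarkov P π) (hlazy : IsLazy P)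
    (hirr : MCIrreducible P) (hap : MCAperiodic P)
    (hA0 : 0 < meas π A) (hA : meas π A ≤ 1 / 2) :
    psiEvo (rev P π) π A ≥ (1 / 4) * psiPlus (rev P π) π A :=
  evolving_ge_quarter_spread_general P π A hM hlazy hA0
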